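/- Let A be a type and w a list over the signed alphabet A × Bool. Any reduction sequence for w can be transformed, by a finite chain of swap and overlap operations, into any other reduction sequence for w. -/

import Mathlib

/-- The inverse of a signed letter `s = (a, b)` is `s⁻¹ = (a, !b)`. -/
def sinv {A : Type*} (s : A × Bool) : A × Bool := (s.1, !s.2)

/-- A single reduction step at recorded position `p`: it deletes the adjacent inverse
pair `[s, s⁻¹]` occurring after a prefix of length `p`. -/
def StepAt {A : Type*} (p : ℕ) (w v : List (A × Bool)) : Prop :=
  ∃ (x y : List (A × Bool)) (s : A × Bool),
    x.length = p ∧ w = x ++ [s, sinv s] ++ y ∧ v = x ++ y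

/-- `RedSeq w ps` : the list of positions `ps` is a reduction sequence for `w`, i.e. a
finite sequence of single reduction steps (each recording the position of the deleted
adjacent inverse pair) beginning at `w` and ending at the empty list. -/
inductive RedSeq {A : Type*} : List (A × Bool) → List ℕ → Prop
  | nil : RedSeq [] []
  | cons {p : ℕ} {w v : List (A × Bool)} {ps : List ℕ} :
      StepAt p w v → RedSeq v ps → RedSeq w (p :: ps)

/-- A single swap or overlap operation performed somewhere in a reduction sequence of the
list in the first argument.
* `swap` exchanges two consecutive independent steps (the deleted pairs do not overlap),
  performing the two deletions in the opposite order;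
* `overlap` replaces the step deleting the pair `a a⁻¹` in a list `x ++ [a, a⁻¹, a] ++ y`
  by the step deleting the pair `a⁻¹ a` at the next position (both yield `x ++ [a] ++ y`);
* `tail` applies the operation deeper in the sequence. -/
inductive TransfStep {A : Type*} : List (A × Bool) → List ℕ → List ℕ → Prop
  | swap (x : List (A × Bool)) (a : A × Bool) (y : List (A × Bool)) (b : A × Bool)
      (z : List (A × Bool)) (ps : List ℕ) :
      TransfStep (x ++ [a, sinv a] ++ y ++ [b, sinv b] ++ z)
        ((x.length + 2 + y.length) :: x.length :: ps)
        (x.length :: (x.length + y.length) :: ps)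
  | overlap (x : List (A × Bool)) (a : A × Bool) (y : List (A × Bool)) (ps : List ℕ) :
      TransfStep (x ++ [a, sinv a, a] ++ y) (x.length :: ps) ((x.length + 1) :: ps)
  | tail {p : ℕ} {w v : List (A × Bool)} {ps qs : List ℕ} :
      StepAt p w v → TransfStep v ps qs → TransfStep w (p :: ps) (p :: qs)

/-- `Transform w ps qs` : the reduction sequence `ps` for `w` can be transformed into the
reduction sequence `qs` by a finite chain of swap and overlap operations (each operation
may be used in either direction). -/
def Transform {A : Type*} (w : List (A × Bool)) : List ℕ → List ℕ → Prop :=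
  Relation.ReflTransGen (fun ps qs => TransfStep w ps qs ∨ TransfStep w qs ps)

/-!
Induction on the length of `w`. Let the two sequences start with steps at `p ≤ q`. If `p = q`
the tails are reduction sequences of the same list. If `q = p + 1` the two deleted pairs overlap
in a factor `s s⁻¹ s`, and one overlap operation turns the first step into the second. Otherwise
the two deletions are independent and commute; reducing their common result in any way (possible
by confluence of free reduction) gives sequences `p, q - 2, …` and `q, p, …` that differ by one
swap and are connected to the given sequences by the induction hypothesis.
-/

theorem List.exists_eq_append_of_append_eq_append {α : Type*} {x u x' u' : List α}
    (h : x ++ u = x' ++ u') (hl : x.length ≤ x'.length) : ∃ m, x' = x ++ m ∧ u = m ++ u' := by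
  rcases List.append_eq_append_iff.mp h with ⟨m, hx', hu⟩ | ⟨m, hx, hu'⟩
  · exact ⟨m, hx', hu⟩
  · have hlen := congrArg List.length hx
    simp only [List.length_append] at hlen
    obtain rfl : m = [] := List.eq_nil_of_length_eq_zero (by omega)
    exact ⟨[], by simp [hx], by simp [hu']⟩

section

open FreeGroup Relation

variable {A : Type*} {p q : ℕ} {w v u t : List (A × Bool)} {ps qs : List ℕ}

@[simp]
theorem sinv_sinv (s : A × Bool) : sinv (sinv s) = s := by
  simp [sinv]

theorem stepAt_append_pair (x y : List (A × Bool)) (s : A × Bool) :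
    StepAt x.length (x ++ [s, sinv s] ++ y) (x ++ y) :=
  ⟨x, y, s, rfl, rfl, rfl⟩

namespace StepAt

theorem length_eq (h : StepAt p w v) : w.length = v.length + 2 := by
  obtain ⟨x, y, s, -, rfl, rfl⟩ := h
  simp only [List.length_append, List.length_cons, List.length_nil]
  omega

theorem ne_nil (h : StepAt p w v) : w ≠ [] := by
  rintro rfl
  simpa using h.length_eq

theorem red_step (h : StepAt p w v) : Red.Step w v := by
  obtain ⟨x, y, s, -, rfl, rfl⟩ := h
  simpa [sinv] using Red.Step.not (L₁ := x) (L₂ := y) (x := s.1) (b := s.2)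

theorem right_unique (h₁ : StepAt p w v) (h₂ : StepAt p w u) : v = u := by
  obtain ⟨x, y, s, hx, rfl, rfl⟩ := h₁
  obtain ⟨x', y', s', hx', hw, rfl⟩ := h₂
  simp only [List.append_assoc] at hw
  obtain ⟨m, rfl, hm⟩ := List.exists_eq_append_of_append_eq_append hw (by omega)
  obtain rfl : m = [] := List.eq_nil_of_length_eq_zero (by simp at hx'; omega)
  simp_all

theorem exists_overlap (h₁ : StepAt p w v) (h₂ : StepAt (p + 1) w u) :
    ∃ x a y, w = x ++ [a, sinv a, a] ++ y ∧ x.length = p ∧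
      v = x ++ [a] ++ y ∧ u = x ++ [a] ++ y := by
  obtain ⟨x, y, s, hx, rfl, rfl⟩ := h₁
  obtain ⟨x', y', t, hx', hw, rfl⟩ := h₂
  simp only [List.append_assoc] at hw
  obtain ⟨m, rfl, hm⟩ := List.exists_eq_append_of_append_eq_append hw (by omega)
  obtain ⟨c, rfl⟩ : ∃ c, m = [c] := List.length_eq_one_iff.mp (by simp at hx'; omega)
  simp only [List.cons_append, List.nil_append, List.cons.injEq] at hm
  obtain ⟨rfl, rfl, rfl⟩ := hm
  exact ⟨x, s, y', by simp, hx, by simp, by simp⟩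

theorem exists_disjoint (h₁ : StepAt p w v) (h₂ : StepAt q w u) (hpq : p + 2 ≤ q) :
    ∃ x a y b z, w = x ++ [a, sinv a] ++ y ++ [b, sinv b] ++ z ∧
      x.length = p ∧ q = p + 2 + y.length ∧
      v = x ++ y ++ [b, sinv b] ++ z ∧ u = x ++ [a, sinv a] ++ y ++ z := by
  obtain ⟨x, y, s, hx, rfl, rfl⟩ := h₁
  obtain ⟨x', y', t, hx', hw, rfl⟩ := h₂
  simp only [List.append_assoc] at hw
  obtain ⟨m, rfl, hm⟩ := List.exists_eq_append_of_append_eq_append hw (by omega)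
  obtain ⟨m', rfl, rfl⟩ :=
    List.exists_eq_append_of_append_eq_append hm (by simp at hx' ⊢; omega)
  refine ⟨x, s, m', t, y', by simp, hx, ?_, by simp, by simp⟩
  simp at hx'
  omega

end StepAt

theorem FreeGroup.Red.Step.exists_stepAt (h : Red.Step w v) : ∃ p, StepAt p w v := by
  cases h with
  | @not x y a b => exact ⟨x.length, x, y, (a, b), rfl, by simp [sinv], rfl⟩

theorem RedSeq.red (h : RedSeq w ps) : Red w [] := by
  induction h with
  | nil => exact Red.refl
  | cons hs _ ih => exact ih.head hs.red_step

theorem exists_redSeq_of_red (h : Red w []) : ∃ ps, RedSeq w ps := by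
  induction h using ReflTransGen.head_induction_on with
  | refl => exact ⟨[], .nil⟩
  | head hs _ ih =>
    obtain ⟨p, hp⟩ := hs.exists_stepAt
    obtain ⟨ps, hps⟩ := ih
    exact ⟨p :: ps, .cons hp hps⟩

theorem RedSeq.exists_of_stepAt (h : RedSeq v ps) (hs : StepAt q v t) : ∃ rs, RedSeq t rs := by
  obtain ⟨c, hc, htc⟩ := Red.church_rosser h.red hs.red_step.to_red
  obtain rfl := Red.nil_iff.mp hc
  exact exists_redSeq_of_red htc

namespace Transform

theorem of_transfStep (h : TransfStep w ps qs) : Transform w ps qs :=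
  .single (.inl h)

theorem symm (h : Transform w ps qs) : Transform w qs ps :=
  (ReflTransGen.stdSymm (r := SymmGen (TransfStep w))).symm _ _ h

theorem trans {rs : List ℕ} (h₁ : Transform w ps qs) (h₂ : Transform w qs rs) :
    Transform w ps rs :=
  ReflTransGen.trans h₁ h₂

theorem cons (hs : StepAt p w v) (h : Transform v ps qs) : Transform w (p :: ps) (p :: qs) :=
  ReflTransGen.lift (p :: ·)
    (fun _ _ h => Or.imp (TransfStep.tail hs) (TransfStep.tail hs) h) _ _ h

end Transform

theorem transform_cons_cons_of_le
    (ih : ∀ w' : List (A × Bool), w'.length < w.length →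
      ∀ ps' qs', RedSeq w' ps' → RedSeq w' qs' → Transform w' ps' qs')
    (h₁ : StepAt p w v) (h₂ : StepAt q w u) (hv : RedSeq v ps) (hu : RedSeq u qs)
    (hpq : p ≤ q) : Transform w (p :: ps) (q :: qs) := by
  have hwv := h₁.length_eq
  have hwu := h₂.length_eq
  rcases (show q = p ∨ q = p + 1 ∨ p + 2 ≤ q by omega) with rfl | rfl | hd
  · obtain rfl := h₁.right_unique h₂
    exact .cons h₁ (ih v (by omega) ps qs hv hu)
  · obtain ⟨x, a, y, rfl, rfl, rfl, rfl⟩ := h₁.exists_overlap h₂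
    exact (Transform.of_transfStep (.overlap x a y ps)).trans
      (.cons h₂ (ih _ (by omega) ps qs hv hu))
  · obtain ⟨x, a, y, b, z, rfl, rfl, rfl, rfl, rfl⟩ := h₁.exists_disjoint h₂ hd
    -- both orders of the two deletions reach `x ++ y ++ z`; any reduction of it will do
    have hsv : StepAt (x.length + y.length) (x ++ y ++ [b, sinv b] ++ z) (x ++ y ++ z) := by
      simpa using stepAt_append_pair (x ++ y) z b
    have hsu : StepAt x.length (x ++ [a, sinv a] ++ y ++ z) (x ++ y ++ z) := by
      simpa using stepAt_append_pair x (y ++ z) a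
    obtain ⟨rs, hrs⟩ := hv.exists_of_stepAt hsv
    have hv' : Transform _ ps ((x.length + y.length) :: rs) :=
      ih _ (by omega) _ _ hv (.cons hsv hrs)
    have hu' : Transform _ (x.length :: rs) qs := ih _ (by omega) _ _ (.cons hsu hrs) hu
    exact ((Transform.cons h₁ hv').trans
      (Transform.of_transfStep (.swap x a y b z rs)).symm).trans (.cons h₂ hu')

end

/-- Any reduction sequence for a list `w` over the signed alphabet can be
transformed, by a finite chain of swap and overlap operations, into any other reduction
sequence for `w`. -/
theorem transform_any_to_any {A : Type*} (w : List (A × Bool)) (ps qs : List ℕ)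
    (hp : RedSeq w ps) (hq : RedSeq w qs) : Transform w ps qs := by
  induction hn : w.length using Nat.strong_induction_on generalizing w ps qs with
  | _ n ih =>
  subst hn
  have ih' : ∀ w' : List (A × Bool), w'.length < w.length →
      ∀ ps' qs', RedSeq w' ps' → RedSeq w' qs' → Transform w' ps' qs' :=
    fun w' hw' _ _ hp hq => ih _ hw' w' _ _ hp hq rfl
  rcases hp with _ | @⟨p, _, v, ps, h₁, hv⟩ <;> rcases hq with _ | @⟨q, _, u, qs, h₂, hu⟩
  · exact .refl
  · exact absurd rfl h₂.ne_nil
  · exact absurd rfl h₁.ne_nil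
  · rcases le_total p q with hpq | hqp
    · exact transform_cons_cons_of_le ih' h₁ h₂ hv hu hpq
    · exact (transform_cons_cons_of_le ih' h₂ h₁ hu hv hqp).symm
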